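/- For all real numbers α with 0 ≤ α ≤ 1 and every constant C > 0 there exists a constant C' > 0 such that the following holds: for every finite simple graph G, if for every pair of ADJACENT vertices u, v of G and every pair of disjoint vertex sets U ⊆ N(u)\{v} and V ⊆ N(v)\{u} the number of edges of G with one endpoint in U and the other endpoint in V is at most C·(|U|+|V|)^{2−α}, then the number of edges of G is at most C'·|V(G)|^{2−α/(α+1)}. -/

import Mathlib

/-- The number of edges of `G` with one endpoint in `U` and the other endpoint in `W`
(counted via ordered pairs; for disjoint `U`, `W` each such edge is counted once). -/
noncomputable def edgesBetween {V : Type*} (G : SimpleGraph V) (U W : Set V) : ℕ :=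
  {p : V × V | p.1 ∈ U ∧ p.2 ∈ W ∧ G.Adj p.1 p.2}.ncard

/-!
Sort the edges of `G` into classes `G_j` by the dyadic size `2 ^ j` of the larger degree of their
endpoints. All degrees in `G_j` are below `2 ^ (j + 1)`, and every edge of `G_j` has an endpoint of
`G`-degree at least `2 ^ j`; there are at most `2 e(G) / 2 ^ j` such vertices. Counting cherries
and then 4-cycles with Cauchy–Schwarz bounds `e(G_j) ^ 3` by `n² (e(G) / 2 ^ j)²` times the number
of 4-cycles through an edge `xy` of `G_j`, and these are the edges between `N(x) \ {y}` and
`N(y) \ {x}`. The hypothesis only controls disjoint pairs `U, W`, so the common part of the two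
neighbourhoods is split by a max-cut, which costs a factor `6`. Altogether
`e(G_j) ≲ (n e(G)) ^ (2/3) 2 ^ (-jα/3)`, besides the trivial `e(G_j) ≤ n 2 ^ j`. Using the trivial
bound for `2 ^ j ≲ n ^ (1/(α+1))` and the geometric one beyond gives
`e ≤ 2T + c e ^ (2/3) T ^ (1/3)` with `T = n ^ (2 - α/(α+1))`, whence `e = O(T)`.
For `α = 0` the claim is just `e ≤ n²`.
-/

open Finset

lemma sum_range_le_of_le_two_pow_of_le_geom {a : ℕ → ℝ} {A B r : ℝ} (ha : ∀ j, 0 ≤ a j)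
    (hA : ∀ j, a j ≤ A * 2 ^ j) (hB : ∀ j, a j ≤ B * r ^ j) (hr₀ : 0 ≤ r) (hr₁ : r < 1)
    (L j₀ : ℕ) : ∑ j ∈ range L, a j ≤ A * 2 ^ j₀ + B * (r ^ j₀ / (1 - r)) := by
  have hA₀ : 0 ≤ A := by simpa using (ha 0).trans (hA 0)
  have hB₀ : 0 ≤ B := by simpa using (ha 0).trans (hB 0)
  calc ∑ j ∈ range L, a j ≤ ∑ j ∈ range (j₀ + L), a j :=
        sum_le_sum_of_subset_of_nonneg (range_mono (by omega)) fun j _ _ => ha j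
    _ = ∑ j ∈ range j₀, a j + ∑ j ∈ Ico j₀ (j₀ + L), a j :=
        (sum_range_add_sum_Ico _ (by omega)).symm
    _ ≤ A * ∑ j ∈ range j₀, (2 : ℝ) ^ j + B * ∑ j ∈ Ico j₀ (j₀ + L), r ^ j := by
        rw [mul_sum, mul_sum]
        exact add_le_add (sum_le_sum fun j _ => hA j) (sum_le_sum fun j _ => hB j)
    _ ≤ A * 2 ^ j₀ + B * (r ^ j₀ / (1 - r)) := by
        gcongr
        · rw [geom_sum_eq (by norm_num : (2 : ℝ) ≠ 1)]
          norm_num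
        · exact geom_sum_Ico_le_of_lt_one hr₀ hr₁

lemma le_mul_of_le_add_of_pow_three_le {E T Y κ : ℝ} (hT : 0 ≤ T) (hκ : 0 ≤ κ)
    (hE : E ≤ 2 * T + Y) (hY : Y ^ 3 ≤ κ * E ^ 2 * T) : E ≤ (4 + 8 * κ) * T := by
  by_cases hsmall : E ≤ 4 * T
  · nlinarith
  · have hE₀ : 0 < E := by linarith
    have hcube : (E / 2) ^ 3 ≤ κ * E ^ 2 * T :=
      (pow_le_pow_left₀ (by linarith) (by linarith) 3).trans hY
    have : E * E ^ 2 ≤ 8 * κ * T * E ^ 2 := by nlinarith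
    nlinarith [le_of_mul_le_mul_right this (by positivity)]

lemma cube_two_rpow_neg_div_three_pow (α : ℝ) (j : ℕ) :
    (((2 : ℝ) ^ (-α / 3)) ^ j) ^ 3 = ((2 : ℝ) ^ j) ^ (-α) := by
  rw [Real.rpow_pow_comm (by norm_num), ← Real.rpow_natCast _ 3, ← Real.rpow_mul (by positivity)]
  norm_num

lemma le_mul_rpow_pow_of_pow_three_le {a c α : ℝ} (hc : 0 ≤ c) (j : ℕ)
    (h : a ^ 3 ≤ c * ((2 : ℝ) ^ j) ^ (-α)) :
    a ≤ c ^ ((3 : ℕ)⁻¹ : ℝ) * ((2 : ℝ) ^ (-α / 3)) ^ j := by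
  refine le_of_pow_le_pow_left₀ three_ne_zero (by positivity) ?_
  rwa [mul_pow, Real.rpow_inv_natCast_pow hc three_ne_zero, cube_two_rpow_neg_div_three_pow]

lemma le_mul_rpow_of_dyadic_bounds {α K n E : ℝ} (hα : 0 < α) (hK : 0 ≤ K) (hn : 1 ≤ n)
    {a : ℕ → ℝ} (ha : ∀ j, 0 ≤ a j) (hlin : ∀ j, a j ≤ n * 2 ^ j)
    (hcube : ∀ j, a j ^ 3 ≤ K * n ^ 2 * E ^ 2 * ((2 : ℝ) ^ j) ^ (-α)) (L : ℕ)
    (hsum : E ≤ ∑ j ∈ range L, a j) :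
    E ≤ (4 + 8 * (K / (1 - (2 : ℝ) ^ (-α / 3)) ^ 3)) * n ^ (2 - α / (α + 1)) := by
  set r : ℝ := (2 : ℝ) ^ (-α / 3)
  have hr₀ : 0 ≤ r := by positivity
  have hr₁ : r < 1 := Real.rpow_lt_one_of_one_lt_of_neg one_lt_two (by linarith)
  have hκ : 0 ≤ K / (1 - r) ^ 3 := div_nonneg hK (pow_nonneg (by linarith) 3)
  set c : ℝ := K * n ^ 2 * E ^ 2
  have hnx : n * n ^ (1 / (α + 1)) = n ^ (2 - α / (α + 1)) := by
    rw [show 2 - α / (α + 1) = 1 + 1 / (α + 1) by field_simp; ring,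
      Real.rpow_add (by positivity), Real.rpow_one]
  have hnx' : n ^ 2 * (n ^ (1 / (α + 1))) ^ (-α) = n ^ (2 - α / (α + 1)) := by
    rw [← Real.rpow_mul (by positivity), ← Real.rpow_two, ← Real.rpow_add (by positivity)]
    congr 1
    field_simp
    ring
  -- the dyadic scale `2 ^ (k + 1)` where the two bounds on `a` cross over
  obtain ⟨k, hk₁, hk₂⟩ := exists_nat_pow_near (Real.one_le_rpow hn (by positivity) :
    1 ≤ n ^ (1 / (α + 1))) one_lt_two
  have hgeom := sum_range_le_of_le_two_pow_of_le_geom ha hlin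
    (fun j => le_mul_rpow_pow_of_pow_three_le (by positivity) j (hcube j)) hr₀ hr₁ L (k + 1)
  refine le_mul_of_le_add_of_pow_three_le (by positivity) hκ
    (hsum.trans (hgeom.trans (add_le_add_left ?_ _))) ?_
  · calc n * 2 ^ (k + 1) = 2 * (n * 2 ^ k) := by ring
      _ ≤ 2 * (n * n ^ (1 / (α + 1))) := by gcongr
      _ = 2 * n ^ (2 - α / (α + 1)) := by rw [hnx]
  · have h2k : ((2 : ℝ) ^ (k + 1)) ^ (-α) ≤ (n ^ (1 / (α + 1))) ^ (-α) :=
      Real.rpow_le_rpow_of_nonpos (by positivity) hk₂.le (by linarith)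
    calc (c ^ ((3 : ℕ)⁻¹ : ℝ) * (r ^ (k + 1) / (1 - r))) ^ 3
          = K / (1 - r) ^ 3 * E ^ 2 * (n ^ 2 * ((2 : ℝ) ^ (k + 1)) ^ (-α)) := by
            rw [mul_pow, div_pow, Real.rpow_inv_natCast_pow (by positivity) three_ne_zero,
              cube_two_rpow_neg_div_three_pow]
            ring
      _ ≤ K / (1 - r) ^ 3 * E ^ 2 * (n ^ 2 * (n ^ (1 / (α + 1))) ^ (-α)) := by gcongr
      _ = K / (1 - r) ^ 3 * E ^ 2 * n ^ (2 - α / (α + 1)) := by rw [hnx']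

lemma add_six_mul_rpow_le {α C D : ℝ} (hα₀ : 0 ≤ α) (hα₁ : α ≤ 1) (hC : 0 ≤ C) (hD : 1 ≤ D) :
    4 * D + 6 * (C * (4 * D) ^ (2 - α)) ≤ (96 * C + 4) * D ^ 2 * D ^ (-α) := by
  have h₁ : D ≤ D ^ (2 - α) := by
    simpa using Real.rpow_le_rpow_of_exponent_le hD (by linarith : (1 : ℝ) ≤ 2 - α)
  have h₂ : (4 : ℝ) ^ (2 - α) ≤ 16 := by
    calc (4 : ℝ) ^ (2 - α) ≤ 4 ^ (2 : ℝ) :=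
          Real.rpow_le_rpow_of_exponent_le (by norm_num) (by linarith)
      _ = 16 := by norm_num
  have hsplit : D ^ 2 * D ^ (-α) = D ^ (2 - α) := by
    rw [sub_eq_add_neg, Real.rpow_add (by positivity), Real.rpow_two]
  rw [Real.mul_rpow (by norm_num) (by positivity), mul_assoc, hsplit]
  have : 0 ≤ D ^ (2 - α) := by positivity
  nlinarith [mul_nonneg (mul_nonneg hC this) (sub_nonneg.mpr h₂)]

namespace SimpleGraph

variable {V : Type*}

section interedges

variable (G : SimpleGraph V) [DecidableRel G.Adj]

lemma card_interedges_eq_sum (s t : Finset V) :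
    #(G.interedges s t) = ∑ a ∈ s, #{b ∈ t | G.Adj a b} := by
  simp only [interedges_def, card_filter, sum_product]

lemma card_interedges_comm (s t : Finset V) : #(G.interedges s t) = #(G.interedges t s) :=
  haveI : Std.Symm G.Adj := G.symm
  Rel.card_interedges_comm _ _

variable [DecidableEq V]

lemma card_interedges_union_left {s s' : Finset V} (h : Disjoint s s') (t : Finset V) :
    #(G.interedges (s ∪ s') t) = #(G.interedges s t) + #(G.interedges s' t) := by
  simp only [card_interedges_eq_sum, sum_union h]

lemma card_interedges_union_right (s : Finset V) {t t' : Finset V} (h : Disjoint t t') :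
    #(G.interedges s (t ∪ t')) = #(G.interedges s t) + #(G.interedges s t') := by
  simp only [card_interedges_comm G s, card_interedges_union_left G h]

lemma card_interedges_insert_left {a : V} {s : Finset V} (ha : a ∉ s) (t : Finset V) :
    #(G.interedges (insert a s) t) = #(G.interedges s t) + #{b ∈ t | G.Adj a b} := by
  rw [card_interedges_eq_sum, sum_insert ha, card_interedges_eq_sum, add_comm]

lemma card_interedges_insert_right (s : Finset V) {a : V} {t : Finset V} (ha : a ∉ t) :
    #(G.interedges s (insert a t)) = #(G.interedges s t) + #{b ∈ s | G.Adj a b} := by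
  rw [card_interedges_comm, card_interedges_insert_left G ha, card_interedges_comm]

lemma card_interedges_insert_self {a : V} {s : Finset V} (ha : a ∉ s) :
    #(G.interedges (insert a s) (insert a s)) =
      #(G.interedges s s) + 2 * #{b ∈ s | G.Adj a b} := by
  rw [card_interedges_insert_left G ha, card_interedges_insert_right G _ ha,
    filter_insert, if_neg (G.irrefl)]
  ring

-- Max-cut: at least half of the edges of `S` cross `(A, S \ A)`; `interedges S S` counts each
-- of them twice.
lemma exists_subset_card_interedges_le (S : Finset V) :
    ∃ A ⊆ S, #(G.interedges S S) ≤ 4 * #(G.interedges A (S \ A)) := by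
  induction S using Finset.induction_on with
  | empty => exact ⟨∅, subset_rfl, by simp [interedges]⟩
  | @insert a S haS ih =>
    obtain ⟨A, hAS, hA⟩ := ih
    have hsplit : #{b ∈ S | G.Adj a b} = #{b ∈ A | G.Adj a b} + #{b ∈ S \ A | G.Adj a b} := by
      rw [← card_union_of_disjoint (disjoint_filter_filter disjoint_sdiff), ← filter_union,
        union_sdiff_of_subset hAS]
    have haA : a ∉ A := fun h => haS (hAS h)
    rw [card_interedges_insert_self G haS]
    by_cases hside : #{b ∈ A | G.Adj a b} ≤ #{b ∈ S \ A | G.Adj a b}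
    · refine ⟨insert a A, insert_subset_insert a hAS, ?_⟩
      rw [insert_sdiff_insert, sdiff_insert_of_notMem haS, card_interedges_insert_left G haA]
      omega
    · refine ⟨A, hAS.trans (subset_insert a S), ?_⟩
      rw [insert_sdiff_of_notMem _ haA, card_interedges_insert_right G _ (by simp [haS])]
      omega

lemma card_interedges_le_six_mul (A B : Finset V) {M : ℝ}
    (h : ∀ U ⊆ A, ∀ W ⊆ B, Disjoint U W → (#(G.interedges U W) : ℝ) ≤ M) :
    (#(G.interedges A B) : ℝ) ≤ 6 * M := by
  set S := A ∩ B
  obtain ⟨A', hA'S, hcut⟩ := G.exists_subset_card_interedges_le S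
  have hA : #(G.interedges A B) = #(G.interedges (A \ S) B) + #(G.interedges S B) := by
    rw [← card_interedges_union_left G sdiff_disjoint, sdiff_union_of_subset inter_subset_left]
  have hB : #(G.interedges S B) = #(G.interedges S (B \ S)) + #(G.interedges S S) := by
    rw [add_comm, ← card_interedges_union_right G _ disjoint_sdiff,
      union_sdiff_of_subset inter_subset_right]
  have h₁ := h (A \ S) sdiff_subset B subset_rfl
    (by rw [sdiff_inter_self_left]; exact sdiff_disjoint)
  have h₂ := h S inter_subset_left (B \ S) sdiff_subset disjoint_sdiff
  have h₃ := h A' (hA'S.trans inter_subset_left) (S \ A') (sdiff_subset.trans inter_subset_right)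
    disjoint_sdiff
  have hcut' : (#(G.interedges S S) : ℝ) ≤ 4 * #(G.interedges A' (S \ A')) := by exact_mod_cast hcut
  rw [hA, hB]
  push_cast
  linarith

end interedges

def SparseSubBineighborhoods (G : SimpleGraph V) (f : ℕ → ℝ) (u v : V) : Prop :=
  ∀ U W : Set V, U ⊆ G.neighborSet u \ {v} → W ⊆ G.neighborSet v \ {u} → Disjoint U W →
    (edgesBetween G U W : ℝ) ≤ f (U.ncard + W.ncard)

section sparse

variable {G H : SimpleGraph V} [DecidableRel G.Adj] [DecidableRel H.Adj] {f : ℕ → ℝ}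

lemma edgesBetween_coe_finset (U W : Finset V) :
    edgesBetween G U W = #(G.interedges U W) := by
  rw [edgesBetween, ← Set.ncard_coe_finset]
  congr 1
  ext
  simp [mem_interedges_iff]

variable [Fintype V] [DecidableEq V]

lemma SparseSubBineighborhoods.card_interedges_le {u v : V}
    (h : G.SparseSubBineighborhoods f u v) {U W : Finset V}
    (hU : U ⊆ G.neighborFinset u \ {v}) (hW : W ⊆ G.neighborFinset v \ {u}) (hUW : Disjoint U W) :
    (#(G.interedges U W) : ℝ) ≤ f (#U + #W) := by
  have := h U W (by rw [← coe_neighborFinset, ← coe_singleton, ← coe_sdiff]; exact_mod_cast hU)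
    (by rw [← coe_neighborFinset, ← coe_singleton, ← coe_sdiff]; exact_mod_cast hW)
    (disjoint_coe.mpr hUW)
  simpa [edgesBetween_coe_finset] using this

lemma card_interedges_neighborFinset_le (hHG : H ≤ G)
    (hG : ∀ u v, G.Adj u v → G.SparseSubBineighborhoods f u v) (hf : Monotone f)
    {u v : V} (huv : H.Adj u v) :
    (#(H.interedges (H.neighborFinset u \ {v}) (H.neighborFinset v \ {u})) : ℝ) ≤
      6 * f (H.degree u + H.degree v) := by
  have hN : ∀ w, H.neighborFinset w ⊆ G.neighborFinset w := fun w x => by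
    simpa using @hHG w x
  refine H.card_interedges_le_six_mul _ _ fun U hU W hW hUW => ?_
  calc (#(H.interedges U W) : ℝ) ≤ #(G.interedges U W) := by
        gcongr
        intro p
        simp only [mem_interedges_iff]
        exact fun ⟨h₁, h₂, h₃⟩ => ⟨h₁, h₂, hHG h₃⟩
    _ ≤ f (#U + #W) :=
        (hG u v (hHG huv)).card_interedges_le (hU.trans (sdiff_subset_sdiff (hN u) subset_rfl))
          (hW.trans (sdiff_subset_sdiff (hN v) subset_rfl)) hUW
    _ ≤ f (H.degree u + H.degree v) := by
        apply hf
        rw [← card_neighborFinset_eq_degree, ← card_neighborFinset_eq_degree]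
        exact add_le_add (card_le_card (hU.trans sdiff_subset))
          (card_le_card (hW.trans sdiff_subset))

end sparse

section counting

variable [Fintype V] (H : SimpleGraph V) [DecidableRel H.Adj]

lemma sum_degree_eq_sum_card_filter_adj (W : Finset V) :
    ∑ y ∈ W, H.degree y = ∑ x, #{y ∈ W | H.Adj x y} := by
  have := sum_card_bipartiteAbove_eq_sum_card_bipartiteBelow (s := univ) (t := W) (r := H.Adj)
  simp only [bipartiteAbove, bipartiteBelow] at this
  rw [this]
  refine sum_congr rfl fun y _ => ?_
  rw [← card_neighborFinset_eq_degree, neighborFinset_eq_filter]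
  simp only [adj_comm]

lemma sum_sq_card_filter_adj_eq (W : Finset V) :
    ∑ x, #{y ∈ W | H.Adj x y} ^ 2 =
      ∑ y ∈ W, ∑ y' ∈ W, #{x | H.Adj x y ∧ H.Adj x y'} := by
  have := sum_card_bipartiteAbove_eq_sum_card_bipartiteBelow (s := univ) (t := W ×ˢ W)
    (r := fun x p => H.Adj x p.1 ∧ H.Adj x p.2)
  simp only [bipartiteAbove, bipartiteBelow] at this
  rw [← sum_product' (f := fun y y' => #{x | H.Adj x y ∧ H.Adj x y'}), ← this]
  refine sum_congr rfl fun x _ => ?_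
  rw [sq, ← card_product, filter_product]

lemma sq_sum_sq_card_filter_adj_le (W : Finset V) :
    (∑ x, #{y ∈ W | H.Adj x y} ^ 2) ^ 2 ≤
      #W ^ 2 * ∑ y, ∑ y', #{x | H.Adj x y ∧ H.Adj x y'} ^ 2 := by
  rw [H.sum_sq_card_filter_adj_eq W, ← sum_product', sq #W, ← card_product,
    ← sum_product' (f := fun y y' => #{x | H.Adj x y ∧ H.Adj x y'} ^ 2), univ_product_univ]
  exact sq_sum_le_card_mul_sum_sq.trans
    (Nat.mul_le_mul_left _ (sum_le_sum_of_subset (subset_univ _)))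

variable [DecidableEq V]

lemma card_edgeFinset_le_sum_degree (W : Finset V) (hW : ∀ x y, H.Adj x y → x ∈ W ∨ y ∈ W) :
    #H.edgeFinset ≤ ∑ y ∈ W, H.degree y := by
  calc #H.edgeFinset ≤ #(W.biUnion fun y => H.incidenceFinset y) := by
        refine card_le_card fun e he => ?_
        induction e using Sym2.ind with
        | h x y =>
          have hxy : H.Adj x y := by simpa using he
          simp only [mem_biUnion, mem_incidenceFinset, incidenceSet, Set.mem_ofPred_eq,
            mem_edgeSet, hxy, true_and, Sym2.mem_iff]
          rcases hW x y hxy with hx | hy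
          exacts [⟨x, hx, Or.inl rfl⟩, ⟨y, hy, Or.inr rfl⟩]
    _ ≤ ∑ y ∈ W, #(H.incidenceFinset y) := card_biUnion_le
    _ = ∑ y ∈ W, H.degree y := by simp only [card_incidenceFinset_eq_degree]

lemma sum_sq_codegree_le (Δ : ℕ) (hΔ : ∀ v, H.degree v ≤ Δ) :
    ∑ y, ∑ y', #{x | H.Adj x y ∧ H.Adj x y'} ^ 2 ≤
      ∑ y, ∑ x ∈ H.neighborFinset y,
        (2 * Δ + #(H.interedges (H.neighborFinset x \ {y}) (H.neighborFinset y \ {x}))) := by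
  -- `g y x y'` counts the common neighbours of `y` and `y'` other than `x`, so
  -- `codeg(y, y')² ≤ ∑_{x common} (1 + g y x y')`. Reindexed by `x ∈ N(y)`, `y' ∈ N(x)`, the term
  -- `y' = y` is degenerate and the others count the edges between `N(x) \ {y}` and `N(y) \ {x}`.
  set g : V → V → V → ℕ := fun y x y' => #{x' ∈ H.neighborFinset y \ {x} | H.Adj y' x'}
  have hsq : ∀ y y', #{x | H.Adj x y ∧ H.Adj x y'} ^ 2 ≤
      ∑ x ∈ {x | H.Adj x y ∧ H.Adj x y'}, (1 + g y x y') := by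
    intro y y'
    rw [sq, ← smul_eq_mul, ← sum_const]
    refine sum_le_sum fun x hx => ?_
    refine (card_le_card fun x' hx' => ?_).trans ((card_insert_le x _).trans_eq (add_comm _ _))
    simp only [mem_filter, mem_univ, true_and] at hx hx'
    by_cases h : x' = x
    · simp [h]
    · simp [h, hx'.1.symm, hx'.2.symm]
  have hcomm : ∀ y, ∑ y', ∑ x ∈ {x | H.Adj x y ∧ H.Adj x y'}, (1 + g y x y') =
      ∑ x ∈ H.neighborFinset y, ∑ y' ∈ H.neighborFinset x, (1 + g y x y') := fun y =>
    sum_comm' fun y' x => by simp [adj_comm, and_comm]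
  have hx : ∀ y, ∀ x ∈ H.neighborFinset y, ∑ y' ∈ H.neighborFinset x, (1 + g y x y') ≤
      2 * Δ + #(H.interedges (H.neighborFinset x \ {y}) (H.neighborFinset y \ {x})) := by
    intro y x hxy
    have hyx : y ∈ H.neighborFinset x := by simpa [adj_comm] using hxy
    have hsplit : ∑ y' ∈ H.neighborFinset x, g y x y' =
        g y x y + #(H.interedges (H.neighborFinset x \ {y}) (H.neighborFinset y \ {x})) := by
      rw [← add_sum_erase _ _ hyx, ← sdiff_singleton_eq_erase, card_interedges_eq_sum]
    rw [sum_add_distrib, hsplit, sum_const, card_neighborFinset_eq_degree, smul_eq_mul, mul_one]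
    have h₁ := hΔ x
    have h₂ : g y x y ≤ Δ :=
      ((card_filter_le _ _).trans (card_le_card sdiff_subset)).trans
        ((card_neighborFinset_eq_degree H y).trans_le (hΔ y))
    omega
  calc _ ≤ ∑ y, ∑ y', ∑ x ∈ {x | H.Adj x y ∧ H.Adj x y'}, (1 + g y x y') :=
        sum_le_sum fun y _ => sum_le_sum fun y' _ => hsq y y'
    _ = ∑ y, ∑ x ∈ H.neighborFinset y, ∑ y' ∈ H.neighborFinset x, (1 + g y x y') :=
        sum_congr rfl fun y _ => hcomm y
    _ ≤ _ := sum_le_sum fun y _ => sum_le_sum fun x hx' => hx y x hx'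

lemma sum_sq_codegree_le_mul (Δ : ℕ) (hΔ : ∀ v, H.degree v ≤ Δ) {M : ℝ}
    (hM : ∀ x y, H.Adj x y →
      (#(H.interedges (H.neighborFinset x \ {y}) (H.neighborFinset y \ {x})) : ℝ) ≤ M) :
    ((∑ y, ∑ y', #{x | H.Adj x y ∧ H.Adj x y'} ^ 2 : ℕ) : ℝ) ≤
      2 * #H.edgeFinset * (2 * Δ + M) := by
  calc ((∑ y, ∑ y', #{x | H.Adj x y ∧ H.Adj x y'} ^ 2 : ℕ) : ℝ)
      ≤ ∑ y, ∑ x ∈ H.neighborFinset y, ((2 * Δ : ℕ) +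
          (#(H.interedges (H.neighborFinset x \ {y}) (H.neighborFinset y \ {x})) : ℝ)) := by
        exact_mod_cast H.sum_sq_codegree_le Δ hΔ
    _ ≤ ∑ y, ∑ x ∈ H.neighborFinset y, (2 * Δ + M) := by
        gcongr with y _ x hx
        · push_cast; rfl
        · exact hM x y (by simpa [adj_comm] using hx)
    _ = 2 * #H.edgeFinset * (2 * Δ + M) := by
        simp only [sum_const, card_neighborFinset_eq_degree, nsmul_eq_mul, ← sum_mul]
        rw [← Nat.cast_sum, sum_degrees_eq_twice_card_edges]
        push_cast
        ring

lemma card_edgeFinset_pow_three_le (W : Finset V) (hW : ∀ x y, H.Adj x y → x ∈ W ∨ y ∈ W)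
    (Δ : ℕ) (hΔ : ∀ v, H.degree v ≤ Δ) {M : ℝ} (hM₀ : 0 ≤ M)
    (hM : ∀ x y, H.Adj x y →
      (#(H.interedges (H.neighborFinset x \ {y}) (H.neighborFinset y \ {x})) : ℝ) ≤ M) :
    (#H.edgeFinset : ℝ) ^ 3 ≤ 2 * (Fintype.card V : ℝ) ^ 2 * (#W : ℝ) ^ 2 * (2 * Δ + M) := by
  set s := ∑ x, #{y ∈ W | H.Adj x y}
  have he : #H.edgeFinset ≤ s :=
    (H.card_edgeFinset_le_sum_degree W hW).trans_eq (H.sum_degree_eq_sum_card_filter_adj W)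
  have hcs₁ : (s : ℝ) ^ 2 ≤ Fintype.card V * (∑ x, #{y ∈ W | H.Adj x y} ^ 2 : ℕ) := by
    have := sq_sum_le_card_mul_sum_sq (s := univ) (f := fun x => #{y ∈ W | H.Adj x y})
    rw [card_univ] at this
    exact_mod_cast this
  have hcs₂ : ((∑ x, #{y ∈ W | H.Adj x y} ^ 2 : ℕ) : ℝ) ^ 2 ≤ #W ^ 2 * (2 * s * (2 * Δ + M)) :=
    (show _ ≤ (#W ^ 2 * (∑ y, ∑ y', #{x | H.Adj x y ∧ H.Adj x y'} ^ 2 : ℕ) : ℝ) by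
      exact_mod_cast H.sq_sum_sq_card_filter_adj_le W).trans
      (by gcongr; exact (H.sum_sq_codegree_le_mul Δ hΔ hM).trans (by gcongr))
  set X : ℝ := 2 * (Fintype.card V : ℝ) ^ 2 * (#W : ℝ) ^ 2 * (2 * Δ + M)
  have hs : (s : ℝ) ^ 3 * s ≤ X * s :=
    calc (s : ℝ) ^ 3 * s = ((s : ℝ) ^ 2) ^ 2 := by ring
      _ ≤ (Fintype.card V) ^ 2 * ((∑ x, #{y ∈ W | H.Adj x y} ^ 2 : ℕ) : ℝ) ^ 2 := by
          rw [← mul_pow]; gcongr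
      _ ≤ (Fintype.card V) ^ 2 * (#W ^ 2 * (2 * s * (2 * Δ + M))) := by gcongr
      _ = X * s := by ring
  calc (#H.edgeFinset : ℝ) ^ 3 ≤ (s : ℝ) ^ 3 := by gcongr
    _ ≤ X := by
      rcases (Nat.cast_nonneg s : (0 : ℝ) ≤ s).eq_or_lt with h | h
      · rw [← h, zero_pow three_ne_zero]
        positivity
      · exact le_of_mul_le_mul_right hs h

end counting

section degreeClass

variable [Fintype V] (G : SimpleGraph V) [DecidableRel G.Adj]

def degreeClass (j : ℕ) : SimpleGraph V where
  Adj x y := G.Adj x y ∧ Nat.log 2 (max (G.degree x) (G.degree y)) = j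
  symm := ⟨fun _ _ h => ⟨h.1.symm, max_comm (G.degree _) (G.degree _) ▸ h.2⟩⟩
  loopless := ⟨fun _ h => G.irrefl h.1⟩

instance (j : ℕ) : DecidableRel (G.degreeClass j).Adj :=
  fun _ _ => inferInstanceAs (Decidable (_ ∧ _))

variable {G}

lemma degreeClass_le (j : ℕ) : G.degreeClass j ≤ G := fun _ _ h => h.1

lemma two_pow_le_max_degree_of_adj_degreeClass {j : ℕ} {x y : V} (h : (G.degreeClass j).Adj x y) :
    2 ^ j ≤ max (G.degree x) (G.degree y) := by
  have hpos : 0 < G.degree x := G.degree_pos_iff_exists_adj x |>.mpr ⟨y, h.1⟩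
  rw [← h.2]
  exact Nat.pow_log_le_self 2 (by omega)

lemma max_degree_lt_two_pow_of_adj_degreeClass {j : ℕ} {x y : V} (h : (G.degreeClass j).Adj x y) :
    max (G.degree x) (G.degree y) < 2 ^ (j + 1) :=
  h.2 ▸ Nat.lt_pow_succ_log_self one_lt_two _

lemma degree_degreeClass_le (j : ℕ) (x : V) : (G.degreeClass j).degree x ≤ 2 ^ (j + 1) := by
  obtain h | ⟨y, hxy⟩ := Nat.eq_zero_or_pos ((G.degreeClass j).degree x) |>.imp_right
    ((G.degreeClass j).degree_pos_iff_exists_adj x).mp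
  · simp [h]
  · exact (degree_le_of_le (degreeClass_le j)).trans
      ((le_max_left _ _).trans (max_degree_lt_two_pow_of_adj_degreeClass hxy).le)

lemma card_edgeFinset_degreeClass_le (j : ℕ) :
    #(G.degreeClass j).edgeFinset ≤ Fintype.card V * 2 ^ j := by
  have h := (G.degreeClass j).sum_degrees_eq_twice_card_edges
  have : ∑ v, (G.degreeClass j).degree v ≤ Fintype.card V * 2 ^ (j + 1) := by
    simpa using sum_le_sum fun v (_ : v ∈ univ) => degree_degreeClass_le (G := G) j v
  rw [pow_succ] at this
  nlinarith

lemma card_edgeFinset_le_sum_degreeClass :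
    #G.edgeFinset ≤ ∑ j ∈ range (Fintype.card V), #(G.degreeClass j).edgeFinset := by
  classical
  refine (card_le_card fun e he => ?_).trans card_biUnion_le
  induction e using Sym2.ind with
  | h x y =>
    have hxy : G.Adj x y := by simpa using he
    have hlt : Nat.log 2 (max (G.degree x) (G.degree y)) < Fintype.card V :=
      (Nat.log_le_self 2 _).trans_lt (max_lt (G.degree_lt_card_verts x) (G.degree_lt_card_verts y))
    simp only [mem_biUnion, mem_range, mem_edgeFinset, mem_edgeSet]
    exact ⟨_, hlt, hxy, rfl⟩

lemma card_filter_le_degree_mul_le (D : ℕ) :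
    #{v | D ≤ G.degree v} * D ≤ 2 * #G.edgeFinset := by
  rw [← sum_degrees_eq_twice_card_edges, ← smul_eq_mul, ← sum_const]
  calc ∑ _ ∈ {v | D ≤ G.degree v}, D ≤ ∑ v ∈ {v | D ≤ G.degree v}, G.degree v :=
        sum_le_sum fun v hv => (mem_filter.mp hv).2
    _ ≤ ∑ v, G.degree v := sum_le_sum_of_subset (subset_univ _)

variable {f : ℕ → ℝ}

lemma card_interedges_degreeClass_le [DecidableEq V]
    (hG : ∀ u v, G.Adj u v → G.SparseSubBineighborhoods f u v) (hf : Monotone f)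
    {j : ℕ} {x y : V} (h : (G.degreeClass j).Adj x y) :
    (#((G.degreeClass j).interedges ((G.degreeClass j).neighborFinset x \ {y})
      ((G.degreeClass j).neighborFinset y \ {x})) : ℝ) ≤ 6 * f (2 ^ (j + 2)) := by
  refine (card_interedges_neighborFinset_le (degreeClass_le j) hG hf h).trans ?_
  have := degree_degreeClass_le (G := G) j x
  have := degree_degreeClass_le (G := G) j y
  gcongr
  apply hf
  rw [pow_succ] at *
  omega

lemma card_edgeFinset_degreeClass_pow_three_mul_le
    (hG : ∀ u v, G.Adj u v → G.SparseSubBineighborhoods f u v) (hf : Monotone f) (j : ℕ)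
    (hf₀ : 0 ≤ f (2 ^ (j + 2))) :
    (#(G.degreeClass j).edgeFinset : ℝ) ^ 3 * ((2 : ℝ) ^ j) ^ 2 ≤
      8 * (Fintype.card V : ℝ) ^ 2 * (#G.edgeFinset : ℝ) ^ 2 *
        (((2 ^ (j + 2) : ℕ) : ℝ) + 6 * f (2 ^ (j + 2))) := by
  classical
  have hcount := card_edgeFinset_pow_three_le (G.degreeClass j) {v | 2 ^ j ≤ G.degree v}
    (fun x y h => by simpa using le_max_iff.mp (two_pow_le_max_degree_of_adj_degreeClass h))
    (2 ^ (j + 1)) (degree_degreeClass_le j) (by positivity) (fun x y h => card_interedges_degreeClass_le hG hf h)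
  have hW : (#({v | 2 ^ j ≤ G.degree v} : Finset V) : ℝ) * 2 ^ j ≤ 2 * #G.edgeFinset := by
    exact_mod_cast card_filter_le_degree_mul_le (2 ^ j)
  have hΔ : 2 * ((2 ^ (j + 1) : ℕ) : ℝ) = ((2 ^ (j + 2) : ℕ) : ℝ) := by push_cast; ring
  rw [hΔ] at hcount
  calc _ ≤ 2 * (Fintype.card V : ℝ) ^ 2 *
          ((#({v | 2 ^ j ≤ G.degree v} : Finset V) : ℝ) * 2 ^ j) ^ 2 *
          (((2 ^ (j + 2) : ℕ) : ℝ) + 6 * f (2 ^ (j + 2))) := by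
        rw [mul_pow _ ((2 : ℝ) ^ j)]
        nlinarith [pow_pos (pow_pos two_pos j : (0 : ℝ) < 2 ^ j) 2]
    _ ≤ 2 * (Fintype.card V : ℝ) ^ 2 * (2 * #G.edgeFinset) ^ 2 *
          (((2 ^ (j + 2) : ℕ) : ℝ) + 6 * f (2 ^ (j + 2))) := by gcongr
    _ = _ := by ring

lemma card_edgeFinset_degreeClass_pow_three_le {α C : ℝ} (hα₀ : 0 ≤ α) (hα₁ : α ≤ 1)
    (hC : 0 ≤ C)
    (hG : ∀ u v, G.Adj u v → G.SparseSubBineighborhoods (fun k => C * (k : ℝ) ^ (2 - α)) u v)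
    (j : ℕ) :
    (#(G.degreeClass j).edgeFinset : ℝ) ^ 3 ≤
      (768 * C + 32) * (Fintype.card V : ℝ) ^ 2 * (#G.edgeFinset : ℝ) ^ 2 *
        ((2 : ℝ) ^ j) ^ (-α) := by
  have hf : Monotone fun k : ℕ => C * (k : ℝ) ^ (2 - α) := fun a b hab => by
    dsimp only
    gcongr
    linarith
  have key := card_edgeFinset_degreeClass_pow_three_mul_le hG hf j (by positivity)
  have hD : (1 : ℝ) ≤ 2 ^ j := one_le_pow₀ one_le_two
  have h4D : ((2 ^ (j + 2) : ℕ) : ℝ) = 4 * 2 ^ j := by push_cast; ring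
  rw [h4D] at key
  refine le_of_mul_le_mul_right (key.trans ?_) (by positivity : (0 : ℝ) < (2 ^ j) ^ 2)
  calc _ ≤ 8 * (Fintype.card V : ℝ) ^ 2 * (#G.edgeFinset : ℝ) ^ 2 *
          ((96 * C + 4) * ((2 : ℝ) ^ j) ^ 2 * ((2 : ℝ) ^ j) ^ (-α)) := by
        gcongr
        exact add_six_mul_rpow_le hα₀ hα₁ hC hD
    _ = _ := by ring

lemma card_edgeFinset_le_of_sparseSubBineighborhoods {α C : ℝ} (hα₀ : 0 < α) (hα₁ : α ≤ 1)
    (hC : 0 ≤ C)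
    (hG : ∀ u v, G.Adj u v → G.SparseSubBineighborhoods (fun k => C * (k : ℝ) ^ (2 - α)) u v) :
    (#G.edgeFinset : ℝ) ≤ (4 + 8 * ((768 * C + 32) / (1 - (2 : ℝ) ^ (-α / 3)) ^ 3)) *
      (Fintype.card V : ℝ) ^ (2 - α / (α + 1)) := by
  rcases (Fintype.card V).eq_zero_or_pos with h₀ | hpos
  · have : #G.edgeFinset = 0 := by simpa [h₀] using G.card_edgeFinset_le_card_choose_two
    have : (2 : ℝ) ^ (-α / 3) < 1 := Real.rpow_lt_one_of_one_lt_of_neg one_lt_two (by linarith)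
    have : 0 < 1 - (2 : ℝ) ^ (-α / 3) := by linarith
    rw [‹#G.edgeFinset = 0›, Nat.cast_zero]
    positivity
  exact le_mul_rpow_of_dyadic_bounds hα₀ (by positivity) (by exact_mod_cast hpos)
    (a := fun j => (#(G.degreeClass j).edgeFinset : ℝ)) (fun j => by positivity)
    (fun j => by exact_mod_cast card_edgeFinset_degreeClass_le j)
    (card_edgeFinset_degreeClass_pow_three_le hα₀.le hα₁ hC hG) (Fintype.card V)
    (by exact_mod_cast card_edgeFinset_le_sum_degreeClass)

end degreeClass

end SimpleGraph

theorem stmt1 (α C : ℝ) (hα0 : 0 ≤ α) (hα1 : α ≤ 1) (hC : 0 < C) :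
    ∃ C' : ℝ, 0 < C' ∧
      ∀ (V : Type) [Fintype V] (G : SimpleGraph V),
        (∀ u v : V, G.Adj u v → ∀ U W : Set V,
            U ⊆ G.neighborSet u \ {v} → W ⊆ G.neighborSet v \ {u} → Disjoint U W →
            (edgesBetween G U W : ℝ) ≤ C * ((U.ncard + W.ncard : ℕ) : ℝ) ^ (2 - α)) →
        (G.edgeSet.ncard : ℝ) ≤ C' * (Fintype.card V : ℝ) ^ (2 - α / (α + 1)) := by
  rcases hα0.eq_or_lt with rfl | hα
  · refine ⟨1, one_pos, fun V _ G _ => ?_⟩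
    classical
    rw [← SimpleGraph.coe_edgeFinset, Set.ncard_coe_finset]
    norm_num
    exact_mod_cast G.card_edgeFinset_le_card_choose_two.trans (Nat.choose_le_pow _ 2)
  · have : (2 : ℝ) ^ (-α / 3) < 1 := Real.rpow_lt_one_of_one_lt_of_neg one_lt_two (by linarith)
    have : 0 < 1 - (2 : ℝ) ^ (-α / 3) := by linarith
    refine ⟨4 + 8 * ((768 * C + 32) / (1 - (2 : ℝ) ^ (-α / 3)) ^ 3), by positivity,
      fun V _ G hG => ?_⟩
    classical
    rw [← SimpleGraph.coe_edgeFinset, Set.ncard_coe_finset]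
    exact SimpleGraph.card_edgeFinset_le_of_sparseSubBineighborhoods hα hα1 hC.le hG
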